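/- arXiv:1709.05536 — 5 statements merged into one kernel-verified Lean document; each statement's English description precedes it below -/
import Mathlib

section
/- For p an odd prime, ζ_p a primitive p-th root of unity, r a primitive root modulo p, m = (p-1)/2, α = ∏_{j=0}^{m-1}(1-ζ_p^{r^j}), and σ the Galois automorphism of Q(ζ_p)/Q with σ(ζ_p)=ζ_p^r, we have σ(α) = -ζ_p^{p-1}·α. -/
/-!
Since `σ (1 - ζ ^ r ^ j) = 1 - ζ ^ r ^ (j + 1)`, the automorphism `σ` shifts the factors of `α`,
so `(1 - ζ) σ α = α (1 - ζ ^ r ^ m)`. As `r` has order `2m` modulo `p`, `r ^ m ≡ -1`, hence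
`1 - ζ ^ r ^ m = 1 - ζ ^ (p - 1) = -ζ ^ (p - 1) (1 - ζ)`, and cancelling `1 - ζ ≠ 0` gives the claim.
-/

open Finset

theorem pow_eq_neg_one_of_orderOf_eq_two_mul {R : Type*} [CommRing R] [NoZeroDivisors R]
    {x : R} {m : ℕ} (hm : m ≠ 0) (hx : orderOf x = 2 * m) : x ^ m = -1 := by
  have hprim : IsPrimitiveRoot x (2 * m) := hx ▸ IsPrimitiveRoot.orderOf x
  have hsq : IsPrimitiveRoot (x ^ m) 2 := by
    simpa [hm] using hprim.pow_of_dvd hm (dvd_mul_left m 2)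
  exact hsq.eq_neg_one_of_two_right

theorem mul_map_prod_range_of_map_eq_succ {M F : Type*} [CommMonoid M] [FunLike F M M]
    [MonoidHomClass F M M] (g : F) (f : ℕ → M) (hf : ∀ j, g (f j) = f (j + 1)) (m : ℕ) :
    f 0 * g (∏ j ∈ range m, f j) = (∏ j ∈ range m, f j) * f m := by
  rw [map_prod, prod_congr rfl fun j _ => hf j, mul_comm, ← prod_range_succ',
    prod_range_succ]

theorem pow_eq_pow_of_natCast_eq {M : Type*} [Monoid M] {ζ : M} {p a b : ℕ}
    (hζ : ζ ^ p = 1) (hab : (a : ZMod p) = b) : ζ ^ a = ζ ^ b :=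
  pow_eq_pow_of_modEq ((ZMod.natCast_eq_natCast_iff _ _ _).mp hab) hζ

theorem one_sub_pow_pred_eq_of_pow_eq_one {R : Type*} [CommRing R] {ζ : R} {p : ℕ}
    (hζ : ζ ^ p = 1) (hp : p ≠ 0) : 1 - ζ ^ (p - 1) = -ζ ^ (p - 1) * (1 - ζ) := by
  have h : ζ ^ (p - 1) * ζ = 1 := by rw [← pow_succ, Nat.sub_add_cancel (by omega), hζ]
  linear_combination -h

/-- For `p` an odd prime, `ζ` a primitive `p`-th root of unity, `r` a primitive root mod `p`,
`m = (p-1)/2`, `α = ∏_{j<m} (1 - ζ^{r^j})`, and `σ` the Galois automorphism with `σ ζ = ζ^r`,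
we have `σ α = -ζ^{p-1} * α`. -/
theorem stmt0 (p : ℕ) (hp : p.Prime) (hodd : Odd p)
    (K : Type*) [Field K] [CharZero K]
    (ζ : K) (hζ : IsPrimitiveRoot ζ p)
    (r : ℕ) (hr : orderOf (r : ZMod p) = p - 1)
    (σ : K ≃ₐ[ℚ] K) (hσ : σ ζ = ζ ^ r) :
    σ (∏ j ∈ Finset.range ((p - 1) / 2), (1 - ζ ^ r ^ j)) =
      -ζ ^ (p - 1) * ∏ j ∈ Finset.range ((p - 1) / 2), (1 - ζ ^ r ^ j) := by
  have := Fact.mk hp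
  have hp3 : 3 ≤ p := by obtain ⟨k, rfl⟩ := hodd; have := hp.two_le; omega
  set m := (p - 1) / 2
  have hrm : (r : ZMod p) ^ m = -1 :=
    pow_eq_neg_one_of_orderOf_eq_two_mul (by omega) (by rw [hr]; obtain ⟨k, rfl⟩ := hodd; omega)
  have hζrm : ζ ^ r ^ m = ζ ^ (p - 1) :=
    pow_eq_pow_of_natCast_eq hζ.pow_eq_one (by simp [hrm, Nat.cast_sub hp.one_le])
  have hshift := mul_map_prod_range_of_map_eq_succ σ (fun j => 1 - ζ ^ r ^ j)
    (fun j => by simp [hσ, ← pow_mul, pow_succ, mul_comm]) m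
  simp only [pow_zero, pow_one, hζrm,
    one_sub_pow_pred_eq_of_pow_eq_one hζ.pow_eq_one hp.ne_zero] at hshift
  have hζ1 : 1 - ζ ≠ 0 := sub_ne_zero.mpr (hζ.ne_one hp.one_lt).symm
  exact mul_left_cancel₀ hζ1 (by linear_combination hshift)
end

section
/- With notation as above, (ζ_p^λ α)^2 = (-1)^m · p, where m = (p-1)/2. -/
/-!
Since `r` generates `(ℤ/p)ˣ`, the factors `1 - ζ^(r^j)` for `j < p - 1` run over all `1 - ζ^k`,
`0 < k < p`, whose product is `p`. As `r^m ≡ -1`, the second half of these factors is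
`1 - ζ^(-r^j) = -ζ^(-r^j) (1 - ζ^(r^j))`, so `p = (-1)^m ζ^(-s) α²` with `s = ∑_{j<m} r^j`.
Finally `s (r - 1) = r^m - 1 ≡ -2`, hence `-s ≡ 2λ (mod p)`.
-/

open Finset

theorem AddChar.map_sum_eq_prod {ι A M : Type*} [AddCommMonoid A] [CommMonoid M]
    (ψ : AddChar A M) (s : Finset ι) (f : ι → A) :
    ψ (∑ i ∈ s, f i) = ∏ i ∈ s, ψ (f i) :=
  map_prod ψ.toMonoidHom (fun i ↦ Multiplicative.ofAdd (f i)) s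

theorem AddChar.one_sub_map_neg {A M : Type*} [AddGroup A] [CommRing M] (ψ : AddChar A M)
    (a : A) : 1 - ψ (-a) = -ψ (-a) * (1 - ψ a) := by
  have h : ψ (-a) * ψ a = 1 := by rw [← map_add_eq_mul, neg_add_cancel, map_zero_eq_one]
  linear_combination -h

theorem AddChar.prod_range_add_self {A M : Type*} [CommRing A] [CommRing M] (ψ : AddChar A M)
    {x : A} {m : ℕ} (hx : x ^ m = -1) :
    ∏ j ∈ range (m + m), (1 - ψ (x ^ j)) =
      (-1) ^ m * ψ (-∑ j ∈ range m, x ^ j) * (∏ j ∈ range m, (1 - ψ (x ^ j))) ^ 2 := by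
  have hshift (j : ℕ) : 1 - ψ (x ^ (m + j)) = -ψ (-x ^ j) * (1 - ψ (x ^ j)) := by
    rw [pow_add, hx, neg_one_mul, one_sub_map_neg]
  rw [prod_range_add, prod_congr rfl fun j _ ↦ hshift j, prod_mul_distrib, prod_neg, card_range,
    ← sum_neg_distrib, map_sum_eq_prod]
  ring

theorem AddChar.zmodChar_intCast {C : Type*} [DivisionCommMonoid C] {n : ℕ} [NeZero n] {ζ : C}
    (hζ : ζ ^ n = 1) (a : ℤ) : zmodChar n hζ a = ζ ^ a := by
  rw [← zsmul_one, map_zsmul_eq_zpow, ← Nat.cast_one, zmodChar_apply', pow_one]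

theorem neg_geom_sum_eq_two_mul {A : Type*} [CommRing A] {x c : A} {m : ℕ} (hx : x ^ m = -1)
    (hc : c * (x - 1) = 1) : -∑ j ∈ range m, x ^ j = 2 * c := by
  linear_combination (∑ j ∈ range m, x ^ j) * hc - c * geom_sum_mul x m - c * hx

theorem IsPrimitiveRoot.pow_eq_neg_one {R : Type*} [CommRing R] [NoZeroDivisors R] {ζ : R}
    {m : ℕ} (hζ : IsPrimitiveRoot ζ (2 * m)) (hm : m ≠ 0) : ζ ^ m = -1 := by
  have := hζ.pow_of_dvd hm (dvd_mul_left m 2)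
  rw [Nat.mul_div_cancel _ (Nat.pos_of_ne_zero hm)] at this
  exact this.eq_neg_one_of_two_right

theorem prod_range_pow_eq_prod_erase_zero {G₀ M : Type*} [GroupWithZero G₀] [Fintype G₀]
    [DecidableEq G₀] [CommMonoid M] {g : G₀} (hg : orderOf g = Fintype.card G₀ - 1)
    (f : G₀ → M) : ∏ j ∈ range (Fintype.card G₀ - 1), f (g ^ j) = ∏ x ∈ univ.erase 0, f x := by
  have hinj : Set.InjOn (g ^ ·) (range (orderOf g)) := by
    simpa only [coe_range] using pow_injOn_Iio_orderOf
  have hg0 : g ≠ 0 := by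
    rintro rfl
    have := Fintype.one_lt_card (α := G₀)
    rw [orderOf_zero] at hg
    omega
  rw [← hg, ← prod_image hinj]
  congr 1
  refine eq_of_subset_of_card_le ?_ ?_
  · intro x hx
    obtain ⟨j, -, rfl⟩ := mem_image.mp hx
    exact mem_erase.mpr ⟨pow_ne_zero j hg0, mem_univ _⟩
  · rw [card_image_of_injOn hinj, card_range, card_erase_of_mem (mem_univ _), card_univ, hg]

theorem IsPrimitiveRoot.prod_one_sub_zmodChar {R : Type*} [CommRing R] [IsDomain R] {n : ℕ}
    [NeZero n] {ζ : R} (hζ : IsPrimitiveRoot ζ n) :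
    ∏ x ∈ univ.erase (0 : ZMod n), (1 - AddChar.zmodChar n hζ.pow_eq_one x) = n := by
  obtain ⟨k, rfl⟩ : ∃ k, n = k + 1 := Nat.exists_eq_succ_of_ne_zero (NeZero.ne n)
  rw [Nat.cast_succ, ← hζ.prod_one_sub_pow_eq_order]
  have hval {x : ZMod (k + 1)} (hx : x ∈ univ.erase 0) :
      x.val - 1 + 1 = x.val ∧ x.val < k + 1 := by
    have : x.val ≠ 0 := by simpa [ZMod.val_eq_zero] using ne_of_mem_erase hx
    exact ⟨by omega, ZMod.val_lt x⟩
  refine prod_nbij' (fun x ↦ x.val - 1) (fun j ↦ ((j + 1 : ℕ) : ZMod (k + 1))) ?_ ?_ ?_ ?_ ?_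
  · intro x hx
    have := hval hx
    simp only [mem_range]
    omega
  · intro j hj
    rw [mem_range] at hj
    simp only [mem_erase, mem_univ, and_true, ne_eq, ZMod.natCast_eq_zero_iff]
    exact Nat.not_dvd_of_pos_of_lt j.succ_pos (by omega)
  · intro x hx
    simp [(hval hx).1]
  · intro j hj
    rw [mem_range] at hj
    rw [ZMod.val_natCast_of_lt (by omega), Nat.add_sub_cancel]
  · intro x hx
    simp [(hval hx).1, AddChar.zmodChar_apply]

theorem stmt2_general (p : ℕ) (hp : p.Prime) (hodd : Odd p)
    (K : Type*) [Field K]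
    (ζ : K) (hζ : IsPrimitiveRoot ζ p)
    (r : ℕ) (hr : orderOf (r : ZMod p) = p - 1)
    (lam : ℤ) (hlam : ((lam * ((r : ℤ) - 1) : ℤ) : ZMod p) = 1) :
    (ζ ^ lam * ∏ j ∈ Finset.range ((p - 1) / 2), (1 - ζ ^ r ^ j)) ^ 2 =
      (-1 : K) ^ ((p - 1) / 2) * (p : K) := by
  have := Fact.mk hp
  set m := (p - 1) / 2
  have hpm : p - 1 = m + m := by obtain ⟨k, rfl⟩ := hodd; omega
  set ψ := AddChar.zmodChar p hζ.pow_eq_one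
  set R : ZMod p := (r : ZMod p)
  have hR : IsPrimitiveRoot R (2 * m) := by
    rw [two_mul, ← hpm, ← hr]
    exact IsPrimitiveRoot.orderOf R
  have hRm : R ^ m = -1 := hR.pow_eq_neg_one (by have := hp.two_le; omega)
  have hα : ∏ j ∈ range m, (1 - ζ ^ r ^ j) = ∏ j ∈ range m, (1 - ψ (R ^ j)) := by
    simp only [R, ψ, ← Nat.cast_pow, AddChar.zmodChar_apply']
  have hprod : ∏ j ∈ range (m + m), (1 - ψ (R ^ j)) = p := by
    rw [← hpm, ← hζ.prod_one_sub_zmodChar,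
      ← prod_range_pow_eq_prod_erase_zero (g := R) (by rwa [ZMod.card]), ZMod.card]
  have hexp : -∑ j ∈ range m, R ^ j = ((2 * lam : ℤ) : ZMod p) := by
    push_cast at hlam ⊢
    exact neg_geom_sum_eq_two_mul hRm hlam
  have hζlam : (ζ ^ lam) ^ 2 = ψ ((2 * lam : ℤ) : ZMod p) := by
    rw [AddChar.zmodChar_intCast, ← zpow_natCast, ← zpow_mul, mul_comm]
    norm_num
  have hsign : ((-1 : K) ^ m) ^ 2 = 1 := by rw [← pow_mul, pow_mul', neg_one_sq, one_pow]
  rw [hα, mul_pow, hζlam, ← hexp, ← hprod, AddChar.prod_range_add_self ψ hRm]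
  linear_combination (-(ψ (-∑ j ∈ range m, R ^ j) * (∏ j ∈ range m, (1 - ψ (R ^ j))) ^ 2)) * hsign

/-- With notation as above, `(ζ^λ α)^2 = (-1)^m * p`, where `m = (p-1)/2`. -/
theorem stmt2 (p : ℕ) (hp : p.Prime) (hodd : Odd p)
    (K : Type*) [Field K] [CharZero K]
    (ζ : K) (hζ : IsPrimitiveRoot ζ p)
    (r : ℕ) (hr : orderOf (r : ZMod p) = p - 1)
    (lam : ℤ) (hlam : ((lam * ((r : ℤ) - 1) : ℤ) : ZMod p) = 1) :
    (ζ ^ lam * ∏ j ∈ Finset.range ((p - 1) / 2), (1 - ζ ^ r ^ j)) ^ 2 =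
      (-1 : K) ^ ((p - 1) / 2) * (p : K) :=
  stmt2_general p hp hodd K ζ hζ r hr lam hlam
end

section
/- The ℤ-module J = ⟨z, σ(z), ..., σ^{p-2}(z)⟩_ℤ inside ℤ[ζ_p], where z = ζ_p^λ α (1-ζ_p), is an ideal of ℤ[ζ_p]: for every j ∈ J, j·ζ_p ∈ J. -/
/-!
Write `β = ζ^λ α`, so that `z = β (1 - ζ)`. Applying `σ` shifts the factors of `α` by one power
of `r`, and since `r^((p-1)/2) ≡ -1 (mod p)` the product telescopes to `σ α = -ζ⁻¹ α`; the choice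
of `λ` then gives `σ β = -β`. Hence `σ^i z = ±β (1 - ζ^(r^i))`, and as `r` generates `(ℤ/p)ˣ`,
`J` is the ℤ-span of all `β (1 - ζ^a)`, which is stable under `ζ` because
`β (1 - ζ^a) ζ = β (1 - ζ^(a+1)) - β (1 - ζ)`.
-/

open Finset Submodule

theorem IsPrimitiveRoot.zpow_eq_zpow_of_intCast_eq {G₀ : Type*} [CommGroupWithZero G₀] {ζ : G₀}
    {k : ℕ} (h : IsPrimitiveRoot ζ k) (hk : k ≠ 0) {a b : ℤ} (hab : (a : ZMod k) = b) :
    ζ ^ a = ζ ^ b := by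
  obtain ⟨c, hc⟩ := (ZMod.intCast_eq_intCast_iff_dvd_sub a b k).1 hab
  rw [show b = a + k * c by omega, zpow_add₀ (h.ne_zero hk), zpow_mul, h.zpow_eq_one, one_zpow,
    mul_one]

theorem IsPrimitiveRoot.pow_eq_neg_one_of_two_mul {R : Type*} [CommRing R] [IsDomain R] {x : R}
    {k : ℕ} (h : IsPrimitiveRoot x (2 * k)) (hk : k ≠ 0) : x ^ k = -1 := by
  have h2 := h.pow_of_dvd hk (dvd_mul_left k 2)
  rw [Nat.mul_div_cancel _ (Nat.pos_of_ne_zero hk)] at h2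
  exact h2.eq_neg_one_of_two_right

theorem mul_mem_span_range_mul_one_sub_pow {R : Type*} [CommRing R] (β ζ : R) {y : R}
    (hy : y ∈ span ℤ (Set.range fun a : ℕ => β * (1 - ζ ^ a))) :
    y * ζ ∈ span ℤ (Set.range fun a : ℕ => β * (1 - ζ ^ a)) := by
  set S := span ℤ (Set.range fun a : ℕ => β * (1 - ζ ^ a))
  suffices S ≤ S.comap (LinearMap.mulRight ℤ ζ) from this hy
  refine span_le.2 ?_
  rintro _ ⟨a, rfl⟩
  have hmem (b : ℕ) : β * (1 - ζ ^ b) ∈ S := subset_span ⟨b, rfl⟩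
  show β * (1 - ζ ^ a) * ζ ∈ S
  rw [show β * (1 - ζ ^ a) * ζ = β * (1 - ζ ^ (a + 1)) - β * (1 - ζ ^ 1) by ring]
  exact sub_mem (hmem _) (hmem 1)

section

variable {K L : Type*} [CommSemiring K] [Field L] [Algebra K L] (σ : L ≃ₐ[K] L) {ζ : L} {r : ℕ}

theorem one_sub_mul_map_prod_one_sub_pow_pow (hσ : σ ζ = ζ ^ r) (n : ℕ) :
    (1 - ζ) * σ (∏ j ∈ range n, (1 - ζ ^ r ^ j)) =
      (1 - ζ ^ r ^ n) * ∏ j ∈ range n, (1 - ζ ^ r ^ j) := by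
  have hmap : σ (∏ j ∈ range n, (1 - ζ ^ r ^ j)) = ∏ j ∈ range n, (1 - ζ ^ r ^ (j + 1)) := by
    simp only [map_prod, map_sub, map_one, map_pow, hσ, ← pow_mul, pow_succ']
  rw [hmap, mul_comm (1 - ζ), mul_comm (1 - ζ ^ r ^ n)]
  simpa using (prod_range_succ' (fun j => 1 - ζ ^ r ^ j) n).symm.trans (prod_range_succ _ n)

theorem map_zpow_mul_prod_one_sub_pow_pow {p : ℕ} (hζ : IsPrimitiveRoot ζ p) (hp : 1 < p)
    (hσ : σ ζ = ζ ^ r) {n : ℕ} (hrn : (r : ZMod p) ^ n = -1) {lam : ℤ}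
    (hlam : ((lam * ((r : ℤ) - 1) : ℤ) : ZMod p) = 1) :
    σ (ζ ^ lam * ∏ j ∈ range n, (1 - ζ ^ r ^ j)) = -(ζ ^ lam * ∏ j ∈ range n, (1 - ζ ^ r ^ j)) := by
  have hζ0 : ζ ≠ 0 := hζ.ne_zero (by omega)
  have hinv : ζ ^ r ^ n = ζ⁻¹ := by
    rw [← zpow_natCast, ← zpow_neg_one]
    exact hζ.zpow_eq_zpow_of_intCast_eq (by omega) (by push_cast; exact hrn)
  have hprod : σ (∏ j ∈ range n, (1 - ζ ^ r ^ j)) = -ζ⁻¹ * ∏ j ∈ range n, (1 - ζ ^ r ^ j) := by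
    refine mul_left_cancel₀ (sub_ne_zero.2 (hζ.ne_one hp).symm) ?_
    rw [one_sub_mul_map_prod_one_sub_pow_pow σ hσ, hinv]
    field_simp
    ring
  have hlam' : ζ ^ ((r : ℤ) * lam - 1) = ζ ^ lam :=
    hζ.zpow_eq_zpow_of_intCast_eq (by omega) (by push_cast at hlam ⊢; linear_combination hlam)
  rw [map_mul, map_zpow₀, hσ, hprod, ← zpow_natCast, ← zpow_mul, ← hlam', zpow_sub₀ hζ0, zpow_one]
  ring

theorem pow_apply_mul_one_sub (hσ : σ ζ = ζ ^ r) {β : L} (hβ : σ β = -β) (i : ℕ) :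
    (σ ^ i) (β * (1 - ζ)) = (-1) ^ i * (β * (1 - ζ ^ r ^ i)) := by
  induction i with
  | zero => simp
  | succ i ih =>
    rw [pow_succ', AlgEquiv.mul_apply, ih, map_mul, map_mul, map_pow, map_neg, map_one, hβ,
      map_sub, map_one, map_pow, hσ, ← pow_mul, pow_succ]
    ring

theorem span_orbit_eq_span_range {p : ℕ} [Fact p.Prime] (hζ : IsPrimitiveRoot ζ p)
    (hr : orderOf (r : ZMod p) = p - 1) (hσ : σ ζ = ζ ^ r) {β : L} (hβ : σ β = -β) :
    span ℤ {y | ∃ i < p - 1, y = (σ ^ i) (β * (1 - ζ))} =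
      span ℤ (Set.range fun a : ℕ => β * (1 - ζ ^ a)) := by
  have hsign (i : ℕ) (x : L) : (-1 : L) ^ i * x = ((-1 : ℤ) ^ i) • x := by
    rw [zsmul_eq_mul]; push_cast; rfl
  refine le_antisymm (span_le.2 ?_) (span_le.2 ?_)
  · rintro _ ⟨i, -, rfl⟩
    rw [SetLike.mem_coe, pow_apply_mul_one_sub σ hσ hβ, hsign]
    exact smul_mem _ _ (subset_span ⟨r ^ i, rfl⟩)
  · rintro _ ⟨a, rfl⟩
    dsimp only
    by_cases ha : (a : ZMod p) = 0
    · rw [(hζ.pow_eq_one_iff_dvd a).2 ((ZMod.natCast_eq_zero_iff a p).1 ha), sub_self, mul_zero]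
      exact zero_mem _
    obtain ⟨i, hi, hia⟩ : ∃ i < p - 1, (r : ZMod p) ^ i = a := by
      have : NeZero (p - 1) := ⟨by have := (Fact.out : p.Prime).two_le; omega⟩
      exact (hr ▸ IsPrimitiveRoot.orderOf (r : ZMod p)).eq_pow_of_pow_eq_one
        (ZMod.pow_card_sub_one_eq_one ha)
    have hζa : ζ ^ a = ζ ^ r ^ i := by
      rw [← zpow_natCast, ← zpow_natCast]
      exact hζ.zpow_eq_zpow_of_intCast_eq (Fact.out : p.Prime).ne_zero
        (by push_cast; exact hia.symm)
    have : β * (1 - ζ ^ a) = ((-1 : ℤ) ^ i) • (σ ^ i) (β * (1 - ζ)) := by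
      rw [← hsign, pow_apply_mul_one_sub σ hσ hβ, hζa, ← mul_assoc, ← mul_pow]
      simp
    rw [SetLike.mem_coe, this]
    exact smul_mem _ _ (subset_span ⟨i, hi, rfl⟩)

end

/-- The ℤ-module `J = ⟨z, σ(z), ..., σ^{p-2}(z)⟩_ℤ` in `ℤ[ζ_p]`, where
`z = ζ^λ α (1-ζ)`, is an ideal: multiplying any element of `J` by `ζ` stays in `J`. -/
theorem stmt5 (p : ℕ) (hp : p.Prime) (hodd : Odd p)
    (L : Type*) [Field L] [CharZero L]
    (ζ : L) (hζ : IsPrimitiveRoot ζ p)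
    (r : ℕ) (hr : orderOf (r : ZMod p) = p - 1)
    (lam : ℤ) (hlam : ((lam * ((r : ℤ) - 1) : ℤ) : ZMod p) = 1)
    (σ : L ≃ₐ[ℚ] L) (hσ : σ ζ = ζ ^ r)
    (z : L)
    (hz : z = ζ ^ lam * (∏ j ∈ Finset.range ((p - 1) / 2), (1 - ζ ^ r ^ j)) * (1 - ζ))
    (J : Submodule ℤ L)
    (hJ : J = Submodule.span ℤ {y | ∃ i < p - 1, y = (σ ^ i) z}) :
    ∀ j ∈ J, j * ζ ∈ J := by
  have : Fact p.Prime := ⟨hp⟩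
  have hhalf : (r : ZMod p) ^ ((p - 1) / 2) = -1 := by
    have h3 : 3 ≤ p := hp.odd_iff.mp hodd
    have hprim : IsPrimitiveRoot (r : ZMod p) (2 * ((p - 1) / 2)) := by
      rw [show 2 * ((p - 1) / 2) = p - 1 by obtain ⟨k, rfl⟩ := hodd; omega, ← hr]
      exact .orderOf _
    exact hprim.pow_eq_neg_one_of_two_mul (by omega)
  have hβ := map_zpow_mul_prod_one_sub_pow_pow σ hζ hp.one_lt hσ hhalf hlam
  intro j hj
  rw [hJ, hz, span_orbit_eq_span_range σ hζ hr hσ hβ] at hj ⊢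
  exact mul_mem_span_range_mul_one_sub_pow _ _ hj
end

section
/- Let m ≥ 3, ω = e^{2πi/2^m}, θ_j = ω^j + ω^{-j}, k = 2^{m-2}, and L = Q(θ_1). The set {w_0, w_1, ..., w_{k-1}} with w_0 = 1 and w_i = 1 + θ_1 + ... + θ_i is a ℤ-basis of the ring of integers O_L = ℤ[θ_1]. -/
open Polynomial
open scoped IntermediateField

/-! With `θ = ω + ω⁻¹`, the Dickson polynomial `D_t = dickson 1 1 t` is monic of degree `t` and
`D_t(θ) = ω^t + ω^{-t}`, so `w_i = W_i(θ)` for the monic integer polynomial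
`W_i = 1 + D_1 + ⋯ + D_i` of degree `i`. Since `ω^k` is a primitive fourth root of unity, `θ` is a
root of the monic `D_k`; hence `ℤ[θ]` consists of the values at `θ` of integer polynomials of
degree `< k`, which are the integer combinations of the triangular family `W_0, …, W_{k-1}`.
Conversely `ω` is a root of `X² - θX + 1` over `ℚ(θ)`, so `[ℚ(θ) : ℚ] ≥ φ(2^m) / 2 = k` and no
nonzero integer polynomial of degree `< k` vanishes at `θ`, which gives linear independence. -/

section AdjoinOfSequence

variable {R A : Type*} [CommRing R] [Ring A] [Algebra R A] {x : A} {n : ℕ}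

theorem Polynomial.map_aeval_degreeLT [Nontrivial R] {p : R[X]} (hp : p.Monic)
    (hpn : p.natDegree ≤ n) (hx : aeval x p = 0) :
    (degreeLT R n).map (aeval x).toLinearMap = Subalgebra.toSubmodule (Algebra.adjoin R {x}) := by
  refine le_antisymm ?_ fun y hy => ?_
  · rintro _ ⟨q, -, rfl⟩
    exact aeval_mem_adjoin_singleton R x
  · rw [Subalgebra.mem_toSubmodule, Algebra.adjoin_singleton_eq_range_aeval] at hy
    obtain ⟨q, rfl⟩ := hy
    refine ⟨q %ₘ p, ?_, aeval_modByMonic_eq_self_of_root hx⟩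
    rw [SetLike.mem_coe, mem_degreeLT]
    exact (degree_modByMonic_lt q hp).trans_le (degree_le_of_natDegree_le hpn)

theorem Polynomial.Sequence.span_range_aeval [Nontrivial R] (S : Sequence R)
    (hS : ∀ i < n, IsUnit (S i).leadingCoeff) {p : R[X]} (hp : p.Monic) (hpn : p.natDegree ≤ n)
    (hx : aeval x p = 0) :
    Submodule.span R (Set.range fun i : Fin n => aeval x (S i)) =
      Subalgebra.toSubmodule (Algebra.adjoin R {x}) := by
  have hrange : (Set.range fun i : Fin n => aeval x (S i)) = aeval x '' (S '' Set.Iio n) := by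
    rw [← Fin.range_val, ← Set.range_comp, ← Set.range_comp]
    rfl
  rw [hrange, ← map_aeval_degreeLT hp hpn hx, ← S.span_degreeLT hS, Submodule.map_span]
  rfl

theorem Polynomial.Sequence.linearIndependent_aeval [IsDomain R] (S : Sequence R)
    (hx : ∀ q ∈ degreeLT R n, aeval x q = 0 → q = 0) :
    LinearIndependent R fun i : Fin n => aeval x (S i) := by
  refine (S.linearIndependent.comp Fin.val Fin.val_injective).map (f := (aeval x).toLinearMap) ?_
  rw [Submodule.disjoint_def]
  refine fun q hq hker => hx q (Submodule.span_le.mpr ?_ hq) hker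
  rintro _ ⟨i, rfl⟩
  rw [SetLike.mem_coe, mem_degreeLT, Function.comp_apply, S.degree_eq]
  exact_mod_cast i.isLt

end AdjoinOfSequence

section Dickson

variable {R : Type*} [CommRing R]

theorem Polynomial.natDegree_dickson_one_one_le (n : ℕ) : (dickson 1 (1 : R) n).natDegree ≤ n := by
  induction n using Nat.twoStepInduction with
  | zero => exact (natDegree_sub_le _ _).trans (by simp)
  | one => rw [dickson_one]; exact natDegree_X_le
  | more n ih₀ ih₁ =>
    rw [dickson_add_two]
    refine (natDegree_sub_le _ _).trans (max_le ?_ ?_)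
    · exact natDegree_mul_le.trans (by linarith [natDegree_X_le (R := R)])
    · exact (natDegree_C_mul_le _ _).trans (by omega)

theorem Polynomial.coeff_dickson_one_one_self {n : ℕ} (hn : n ≠ 0) :
    (dickson 1 (1 : R) n).coeff n = 1 := by
  induction n using Nat.twoStepInduction with
  | zero => exact absurd rfl hn
  | one => simp [dickson_one]
  | more n _ ih₁ =>
    rw [dickson_add_two, coeff_sub, coeff_X_mul, ih₁ (by omega), coeff_C_mul,
      coeff_eq_zero_of_natDegree_lt ((natDegree_dickson_one_one_le n).trans_lt (by omega))]
    simp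

theorem Polynomial.monic_dickson_one_one {n : ℕ} (hn : n ≠ 0) : (dickson 1 (1 : R) n).Monic :=
  monic_of_natDegree_le_of_coeff_eq_one n (natDegree_dickson_one_one_le n)
    (coeff_dickson_one_one_self hn)

theorem Polynomial.dickson_one_one_aeval_add_of_mul_eq_one {A : Type*} [CommRing A] [Algebra R A]
    {x y : A} (h : x * y = 1) (n : ℕ) : aeval (x + y) (dickson 1 (1 : R) n) = x ^ n + y ^ n := by
  rw [aeval_def, ← eval_map, map_dickson, map_one, dickson_one_one_eval_add_inv x y h]

variable (R) in
noncomputable def dicksonPartialSum (i : ℕ) : R[X] := 1 + ∑ t ∈ Finset.Icc 1 i, dickson 1 (1 : R) t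

theorem natDegree_dicksonPartialSum_le (i : ℕ) : (dicksonPartialSum R i).natDegree ≤ i := by
  refine (natDegree_add_le _ _).trans (max_le (by simp) ?_)
  exact natDegree_sum_le_of_forall_le _ _ fun t ht =>
    (natDegree_dickson_one_one_le t).trans (Finset.mem_Icc.mp ht).2

theorem coeff_dicksonPartialSum_self (i : ℕ) : (dicksonPartialSum R i).coeff i = 1 := by
  rcases Nat.eq_zero_or_pos i with rfl | hi
  · simp [dicksonPartialSum]
  rw [dicksonPartialSum, coeff_add, finsetSum_coeff, Finset.sum_eq_single_of_mem i
    (Finset.mem_Icc.mpr ⟨hi, le_rfl⟩), coeff_dickson_one_one_self hi.ne', coeff_one,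
    if_neg hi.ne', zero_add]
  intro t ht hti
  exact coeff_eq_zero_of_natDegree_lt
    ((natDegree_dickson_one_one_le t).trans_lt (lt_of_le_of_ne (Finset.mem_Icc.mp ht).2 hti))

theorem monic_dicksonPartialSum (i : ℕ) : (dicksonPartialSum R i).Monic :=
  monic_of_natDegree_le_of_coeff_eq_one i (natDegree_dicksonPartialSum_le i)
    (coeff_dicksonPartialSum_self i)

variable (R) in
noncomputable def dicksonPartialSumSequence [Nontrivial R] : Sequence R where
  elems' := dicksonPartialSum R
  degree_eq' i := by
    rw [degree_eq_natDegree (monic_dicksonPartialSum i).ne_zero,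
      natDegree_eq_of_le_of_coeff_ne_zero (natDegree_dicksonPartialSum_le i)
        (by simp [coeff_dicksonPartialSum_self])]

@[simp]
theorem dicksonPartialSumSequence_apply [Nontrivial R] (i : ℕ) :
    dicksonPartialSumSequence R i = dicksonPartialSum R i :=
  rfl

end Dickson

section MinpolyDegree

open IntermediateField

theorem minpoly.natDegree_le_mul_natDegree_adjoin {F E : Type*} [Field F] [Field E] [Algebra F E]
    {x y : E} (hy : IsIntegral F y) (hx : IsIntegral F⟮y⟯ x) :
    (minpoly F x).natDegree ≤ (minpoly F y).natDegree * (minpoly F⟮y⟯ x).natDegree := by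
  have := adjoin.finiteDimensional hy
  have := adjoin.finiteDimensional hx
  have : Module.Finite F F⟮y⟯⟮x⟯ := Module.Finite.trans F⟮y⟯ _
  have : Module.Free F⟮y⟯ F⟮y⟯⟮x⟯ := Module.Free.of_divisionRing _ _
  have : IsScalarTower F F⟮y⟯⟮x⟯ E := IsScalarTower.of_algebraMap_eq fun _ => rfl
  rw [← adjoin.finrank hy, ← adjoin.finrank hx, Module.finrank_mul_finrank]
  calc (minpoly F x).natDegree = (minpoly F (AdjoinSimple.gen F⟮y⟯ x)).natDegree := by
        rw [← minpoly.algebraMap_eq (algebraMap F⟮y⟯⟮x⟯ E).injective,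
          AdjoinSimple.algebraMap_gen]
    _ ≤ _ := minpoly.natDegree_le _

theorem minpoly.natDegree_le_two_mul_natDegree_add_inv {F E : Type*} [Field F] [Field E]
    [Algebra F E] {x : E} (hx0 : x ≠ 0) (hx : IsIntegral F x) :
    (minpoly F x).natDegree ≤ 2 * (minpoly F (x + x⁻¹)).natDegree := by
  set K := F⟮x + x⁻¹⟯
  let θ : K := AdjoinSimple.gen F (x + x⁻¹)
  have hq : Polynomial.aeval x (X ^ 2 - C θ * X + 1) = 0 := by
    simp only [map_add, map_sub, map_mul, map_pow, aeval_X, aeval_C, map_one]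
    rw [IntermediateField.algebraMap_apply, AdjoinSimple.coe_gen]
    field_simp
    ring
  have hq0 : (X ^ 2 - C θ * X + 1 : K[X]).natDegree = 2 := by compute_degree!
  have hmonic : (X ^ 2 - C θ * X + 1 : K[X]).Monic := by monicity!
  rw [mul_comm]
  refine (minpoly.natDegree_le_mul_natDegree_adjoin (hx.add hx.inv) ⟨_, hmonic, hq⟩).trans ?_
  gcongr
  rw [← hq0]
  exact natDegree_le_natDegree (minpoly.degree_le_of_ne_zero K x hmonic.ne_zero hq)

end MinpolyDegree

theorem IsPrimitiveRoot.totient_le_two_mul_natDegree_minpoly_add_inv {K : Type*} [Field K]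
    [CharZero K] {ζ : K} {N : ℕ} (hζ : IsPrimitiveRoot ζ N) (hN : 0 < N) :
    N.totient ≤ 2 * (minpoly ℚ (ζ + ζ⁻¹)).natDegree := by
  rw [← natDegree_cyclotomic N ℚ, cyclotomic_eq_minpoly_rat hζ hN]
  exact minpoly.natDegree_le_two_mul_natDegree_add_inv (hζ.ne_zero hN.ne')
    (hζ.isIntegral hN).tower_top

theorem IsPrimitiveRoot.pow_add_inv_pow_eq_zero {K : Type*} [Field K] {ζ : K} {N : ℕ}
    (hζ : IsPrimitiveRoot ζ (4 * N)) (hN : N ≠ 0) : ζ ^ N + (ζ ^ N)⁻¹ = 0 := by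
  have hsq : (ζ ^ N) ^ 2 = -1 := by
    rw [← pow_mul]
    exact (hζ.pow (by positivity) (by ring : 4 * N = N * 2 * 2)).eq_neg_one_of_two_right
  rw [inv_eq_of_mul_eq_one_right (b := -ζ ^ N) (by linear_combination -hsq), add_neg_cancel]

theorem Polynomial.eq_zero_of_aeval_eq_zero_of_mem_degreeLT {K : Type*} [Field K] [CharZero K]
    {x : K} {n : ℕ} (hn : n ≤ (minpoly ℚ x).natDegree) {q : ℤ[X]} (hq : q ∈ degreeLT ℤ n)
    (hqx : aeval x q = 0) : q = 0 := by
  by_contra hq0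
  have hmap : q.map (algebraMap ℤ ℚ) ≠ 0 :=
    (Polynomial.map_ne_zero_iff (algebraMap ℤ ℚ).injective_int).mpr hq0
  have hle := natDegree_le_natDegree
    (minpoly.degree_le_of_ne_zero ℚ x hmap (by rwa [aeval_map_algebraMap]))
  rw [natDegree_map_eq_of_injective (algebraMap ℤ ℚ).injective_int] at hle
  have := (natDegree_lt_iff_degree_lt hq0).mpr (mem_degreeLT.mp hq)
  omega

/-- Let `m ≥ 3`, `ω` a primitive `2^m`-th root of unity, `θ_j = ω^j + ω^{-j}`,
`k = 2^{m-2}` and `L = ℚ(θ_1)`. The family `w_i = 1 + θ_1 + ⋯ + θ_i`, `0 ≤ i ≤ k-1`,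
is a ℤ-basis of the ring of integers `O_L = ℤ[θ_1]`. -/
theorem stmt12 (m : ℕ) (hm : 3 ≤ m) (ω : ℂ) (hω : IsPrimitiveRoot ω (2 ^ m))
    (w : Fin (2 ^ (m - 2)) → ℂ)
    (hw : ∀ i, w i = 1 + ∑ t ∈ Finset.Icc 1 (i : ℕ), (ω ^ t + (ω ^ t)⁻¹)) :
    LinearIndependent ℤ w ∧
      Submodule.span ℤ (Set.range w) =
        Subalgebra.toSubmodule (Algebra.adjoin ℤ {ω + ω⁻¹}) := by
  have hk : 2 ^ m = 4 * 2 ^ (m - 2) := by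
    rw [show 4 = 2 ^ 2 by rfl, ← pow_add, Nat.add_sub_cancel' (by omega)]
  have hω0 : ω ≠ 0 := hω.ne_zero (by positivity)
  have hωinv : ω * ω⁻¹ = 1 := mul_inv_cancel₀ hω0
  obtain rfl :
      w = fun i : Fin (2 ^ (m - 2)) => aeval (ω + ω⁻¹) (dicksonPartialSumSequence ℤ i) := by
    funext i
    simp only [hw, dicksonPartialSumSequence_apply, dicksonPartialSum, map_add, map_one, map_sum,
      dickson_one_one_aeval_add_of_mul_eq_one hωinv, inv_pow]
  have hroot : aeval (ω + ω⁻¹) (dickson 1 (1 : ℤ) (2 ^ (m - 2))) = 0 := by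
    rw [dickson_one_one_aeval_add_of_mul_eq_one hωinv, inv_pow]
    exact (hk ▸ hω).pow_add_inv_pow_eq_zero (by positivity)
  have hdeg : 2 ^ (m - 2) ≤ (minpoly ℚ (ω + ω⁻¹)).natDegree := by
    have h := hω.totient_le_two_mul_natDegree_minpoly_add_inv (by positivity)
    rw [hk, show 4 * 2 ^ (m - 2) = 2 ^ (m - 2 + 1 + 1) by ring,
      Nat.totient_prime_pow_succ Nat.prime_two, pow_succ] at h
    omega
  exact ⟨(dicksonPartialSumSequence ℤ).linearIndependent_aeval
      fun q => eq_zero_of_aeval_eq_zero_of_mem_degreeLT hdeg,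
    (dicksonPartialSumSequence ℤ).span_range_aeval
      (fun i _ => by simp [(monic_dicksonPartialSum i).leadingCoeff])
      (monic_dickson_one_one (by positivity)) (natDegree_dickson_one_one_le _) hroot⟩
end

section
/- Let m ≥ 3, ω a primitive 2^m-th root of unity, θ_j = ω^j + ω^{-j}, k = 2^{m-2}, and L = Q(θ_1). The ℤ-module L₀ generated by {2, θ_1, θ_2, ..., θ_{k-1}} equals the principal ideal θ_1·O_L of O_L. -/
/-! Write `θ t = ω ^ t + ω⁻¹ ^ t`; everything follows from the product formula
`θ a * θ b = θ (a + b) + θ (a - b)` (for `b ≤ a`). As `ω ^ (2k) = -1` we get `θ k = 0`, and the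
product formula with `θ k` reflects each `θ t` to `± θ s` with `s < k`. So the span `L₀` of the
`θ t`, `t < k` (note `θ 0 = 2`), contains all `θ t`, is stable under multiplication by each `θ a`,
hence is a `ℤ[θ 1]`-module containing `θ 1`: `θ 1 · ℤ[θ 1] ⊆ L₀`. Conversely, the recurrence
`θ (t + 2) = θ 1 θ (t + 1) - θ t` puts all `θ t` in `ℤ[θ 1]`, and, telescoped over the even
indices up to `k = 2r`, gives `2 = θ 1 ∑_{j<r} (-1)^j θ (2j + 1)`; starting from `θ 0 = 2` and
`θ 1`, the recurrence then keeps every `θ t` in `θ 1 · ℤ[θ 1]`. -/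

open scoped Pointwise

section Theta

variable {K : Type*} [Field K]

def theta (ω : K) (t : ℕ) : K := ω ^ t + (ω ^ t)⁻¹

variable {ω : K}

@[simp]
theorem theta_zero (ω : K) : theta ω 0 = 2 := by
  norm_num [theta, one_add_one_eq_two]

theorem theta_one (ω : K) : theta ω 1 = ω + ω⁻¹ := by
  simp [theta]

theorem theta_mul_theta (hω : ω ≠ 0) {a b : ℕ} (hba : b ≤ a) :
    theta ω a * theta ω b = theta ω (a + b) + theta ω (a - b) := by
  obtain ⟨d, rfl⟩ := Nat.exists_eq_add_of_le hba
  rw [Nat.add_sub_cancel_left]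
  simp only [theta, pow_add, mul_inv]
  field_simp
  ring

theorem theta_add_two (hω : ω ≠ 0) (t : ℕ) :
    theta ω (t + 2) = theta ω 1 * theta ω (t + 1) - theta ω t := by
  have := theta_mul_theta hω (Nat.le_add_left 1 t)
  rw [mul_comm, Nat.add_sub_cancel] at this
  rw [this]
  ring

theorem theta_mem_adjoin (hω : ω ≠ 0) (t : ℕ) : theta ω t ∈ Algebra.adjoin ℤ {theta ω 1} := by
  induction t using Nat.twoStepInduction with
  | zero => simp
  | one => exact Algebra.self_mem_adjoin_singleton ℤ _
  | more t ih₀ ih₁ =>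
    rw [theta_add_two hω]
    exact sub_mem (mul_mem (Algebra.self_mem_adjoin_singleton ℤ _) ih₁) ih₀

theorem two_eq_theta_one_mul_sum_add (hω : ω ≠ 0) (r : ℕ) :
    2 = theta ω 1 * ∑ j ∈ Finset.range r, (-1) ^ j * theta ω (2 * j + 1)
      + (-1) ^ r * theta ω (2 * r) := by
  induction r with
  | zero => simp
  | succ r ih =>
    rw [Finset.sum_range_succ, mul_add 2 r 1]
    linear_combination ih - (-1 : K) ^ (r + 1) * theta_add_two hω (2 * r)

theorem theta_eq_zero_of_pow_two_mul_eq_neg_one {k : ℕ} (hk : ω ^ (2 * k) = -1) :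
    theta ω k = 0 := by
  have : (ω ^ k)⁻¹ = -ω ^ k :=
    inv_eq_of_mul_eq_one_right (by rw [mul_neg, ← pow_add, ← two_mul, hk, neg_neg])
  rw [theta, this, add_neg_cancel]

theorem theta_add_eq_neg_theta_sub (hω : ω ≠ 0) {k : ℕ} (hk : ω ^ (2 * k) = -1) {s : ℕ}
    (hs : s ≤ k) : theta ω (k + s) = -theta ω (k - s) := by
  have := theta_mul_theta hω hs
  rw [theta_eq_zero_of_pow_two_mul_eq_neg_one hk, zero_mul] at this
  linear_combination -this

theorem theta_two_mul_add (hω : ω ≠ 0) {k : ℕ} (hk : ω ^ (2 * k) = -1) (s : ℕ) :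
    theta ω (2 * k + s) = -theta ω s := by
  have := theta_mul_theta hω (Nat.le_add_right k s)
  rw [theta_eq_zero_of_pow_two_mul_eq_neg_one hk, mul_zero, Nat.add_sub_cancel_left,
    add_right_comm, ← two_mul] at this
  linear_combination -this

def thetaSpan (ω : K) (k : ℕ) : Submodule ℤ K := Submodule.span ℤ (theta ω '' Set.Iio k)

theorem theta_mem_thetaSpan (hω : ω ≠ 0) {k : ℕ} (hk : ω ^ (2 * k) = -1) (hk0 : 0 < k) (t : ℕ) :
    theta ω t ∈ thetaSpan ω k := by
  induction t using Nat.strong_induction_on with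
  | _ t ih =>
    rcases lt_trichotomy t k with htk | rfl | htk
    · exact Submodule.subset_span ⟨t, htk, rfl⟩
    · rw [theta_eq_zero_of_pow_two_mul_eq_neg_one hk]
      exact zero_mem _
    · rcases lt_or_ge t (2 * k) with ht2k | ht2k
      · obtain ⟨s, rfl⟩ := Nat.exists_eq_add_of_lt htk
        rw [add_assoc, theta_add_eq_neg_theta_sub hω hk (by omega)]
        exact neg_mem (ih _ (by omega))
      · obtain ⟨s, rfl⟩ := Nat.exists_eq_add_of_le ht2k
        rw [theta_two_mul_add hω hk]
        exact neg_mem (ih _ (by omega))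

theorem theta_mul_mem_thetaSpan (hω : ω ≠ 0) {k : ℕ} (hk : ω ^ (2 * k) = -1) (hk0 : 0 < k)
    (a : ℕ) {x : K} (hx : x ∈ thetaSpan ω k) : theta ω a * x ∈ thetaSpan ω k := by
  induction hx using Submodule.span_induction with
  | mem x hx =>
    obtain ⟨b, -, rfl⟩ := hx
    rcases le_total b a with hba | hab
    · rw [theta_mul_theta hω hba]
      exact add_mem (theta_mem_thetaSpan hω hk hk0 _) (theta_mem_thetaSpan hω hk hk0 _)
    · rw [mul_comm, theta_mul_theta hω hab]
      exact add_mem (theta_mem_thetaSpan hω hk hk0 _) (theta_mem_thetaSpan hω hk hk0 _)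
  | zero => simp
  | add x y _ _ hx hy => simpa only [mul_add] using add_mem hx hy
  | smul n x _ hx => simpa only [mul_smul_comm] using Submodule.smul_mem _ n hx

theorem mul_mem_thetaSpan (hω : ω ≠ 0) {k : ℕ} (hk : ω ^ (2 * k) = -1) (hk0 : 0 < k) {c : K}
    (hc : c ∈ Algebra.adjoin ℤ {theta ω 1}) : ∀ x ∈ thetaSpan ω k, c * x ∈ thetaSpan ω k := by
  induction hc using Algebra.adjoin_induction with
  | mem c hc =>
    rw [Set.mem_singleton_iff.mp hc]
    exact fun x => theta_mul_mem_thetaSpan hω hk hk0 1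
  | algebraMap n => simpa only [algebraMap_int_eq, eq_intCast, ← zsmul_eq_mul] using
      fun x => Submodule.smul_mem _ n
  | add c d _ _ hc hd => exact fun x hx => by simpa only [add_mul] using add_mem (hc x hx) (hd x hx)
  | mul c d _ _ hc hd => exact fun x hx => by simpa only [mul_assoc] using hc _ (hd x hx)

theorem theta_image_Iio {k : ℕ} (hk0 : 0 < k) :
    theta ω '' Set.Iio k = insert 2 (theta ω '' Set.Ico 1 k) := by
  rw [← theta_zero ω, ← Set.image_insert_eq]
  congr 1
  ext t
  simp only [Set.mem_Iio, Set.mem_insert_iff, Set.mem_Ico]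
  omega

theorem theta_one_mul_mem_theta_one_smul {c : K} (hc : c ∈ Algebra.adjoin ℤ {theta ω 1}) :
    theta ω 1 * c ∈ theta ω 1 • Subalgebra.toSubmodule (Algebra.adjoin ℤ {theta ω 1}) :=
  Submodule.smul_mem_pointwise_smul c (theta ω 1) (Subalgebra.toSubmodule _) hc

theorem two_mem_theta_one_smul (hω : ω ≠ 0) {k : ℕ} (hk : ω ^ (2 * k) = -1) (hke : Even k) :
    (2 : K) ∈ theta ω 1 • Subalgebra.toSubmodule (Algebra.adjoin ℤ {theta ω 1}) := by
  obtain ⟨r, rfl⟩ := hke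
  have h2 := two_eq_theta_one_mul_sum_add hω r
  rw [two_mul r, theta_eq_zero_of_pow_two_mul_eq_neg_one hk, mul_zero, add_zero] at h2
  rw [h2]
  refine theta_one_mul_mem_theta_one_smul (sum_mem fun j _ => ?_)
  exact mul_mem (pow_mem (neg_mem (one_mem _)) j) (theta_mem_adjoin hω _)

theorem theta_mem_theta_one_smul (hω : ω ≠ 0) {k : ℕ} (hk : ω ^ (2 * k) = -1) (hke : Even k)
    (t : ℕ) : theta ω t ∈ theta ω 1 • Subalgebra.toSubmodule (Algebra.adjoin ℤ {theta ω 1}) := by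
  induction t using Nat.twoStepInduction with
  | zero => simpa using two_mem_theta_one_smul hω hk hke
  | one => simpa using theta_one_mul_mem_theta_one_smul (one_mem (Algebra.adjoin ℤ {theta ω 1}))
  | more t ih₀ _ =>
    rw [theta_add_two hω]
    exact sub_mem (theta_one_mul_mem_theta_one_smul (theta_mem_adjoin hω _)) ih₀

theorem thetaSpan_eq_theta_one_smul {k : ℕ} (hk : ω ^ (2 * k) = -1) (hk0 : 0 < k)
    (hke : Even k) :
    thetaSpan ω k = theta ω 1 • Subalgebra.toSubmodule (Algebra.adjoin ℤ {theta ω 1}) := by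
  have hω : ω ≠ 0 := ne_zero_pow (by omega) (hk ▸ neg_ne_zero.mpr one_ne_zero)
  refine le_antisymm (Submodule.span_le.mpr ?_) ?_
  · rintro _ ⟨t, -, rfl⟩
    exact theta_mem_theta_one_smul hω hk hke t
  · intro x hx
    obtain ⟨c, hc, rfl⟩ := (Submodule.mem_smul_pointwise_iff_exists _ _ _).mp hx
    rw [smul_eq_mul, mul_comm]
    exact mul_mem_thetaSpan hω hk hk0 hc _ (theta_mem_thetaSpan hω hk hk0 1)

end Theta

theorem IsPrimitiveRoot.pow_two_pow_eq_neg_one {R : Type*} [CommRing R] [NoZeroDivisors R]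
    {ζ : R} {n : ℕ} (h : IsPrimitiveRoot ζ (2 ^ (n + 1))) : ζ ^ 2 ^ n = -1 := by
  refine IsPrimitiveRoot.eq_neg_one_of_two_right ?_
  simpa [pow_succ] using h.pow_of_dvd (by positivity) (pow_dvd_pow 2 n.le_succ)

/-- The ℤ-module generated by `{2, θ_1, ..., θ_{k-1}}`, where `θ_t = ω^t + ω^{-t}` and
`k = 2^{m-2}`, equals the principal ideal `θ_1 · O_L` of `O_L = ℤ[θ_1]`,
`L = ℚ(θ_1)` being the maximal real subfield of the `2^m`-th cyclotomic field. -/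
theorem stmt13 (m : ℕ) (hm : 3 ≤ m) (ω : ℂ) (hω : IsPrimitiveRoot ω (2 ^ m)) :
    ∀ y : ℂ,
      y ∈ Submodule.span ℤ
          (insert (2 : ℂ) ((fun t : ℕ => ω ^ t + (ω ^ t)⁻¹) '' Set.Ico 1 (2 ^ (m - 2)))) ↔
        ∃ c ∈ Algebra.adjoin ℤ {ω + ω⁻¹}, y = (ω + ω⁻¹) * c := by
  intro y
  have hk : ω ^ (2 * 2 ^ (m - 2)) = -1 := by
    rw [← pow_succ', show m - 2 + 1 = m - 1 by omega]
    exact IsPrimitiveRoot.pow_two_pow_eq_neg_one (by rwa [Nat.sub_add_cancel (by omega : 1 ≤ m)])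
  have hk0 : 0 < 2 ^ (m - 2) := by positivity
  have hke : Even (2 ^ (m - 2)) := Nat.even_pow.mpr ⟨even_two, by omega⟩
  have hspan := thetaSpan_eq_theta_one_smul hk hk0 hke
  rw [thetaSpan, theta_image_Iio hk0] at hspan
  change y ∈ Submodule.span ℤ (insert 2 (theta ω '' _)) ↔ _
  rw [hspan, Submodule.mem_smul_pointwise_iff_exists, theta_one]
  simp only [smul_eq_mul, Subalgebra.mem_toSubmodule, eq_comm]
end
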